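/- With a'₁₂ = (1/2) Σ_{i,j} sgn(i−j) e_{ij} ⊗ e_{ji} and b'₁₂ = −(1/2) Σ_{i,j} sgn(i−j) e_{ij} ⊗ e_{ij} − (1/2) Σ_{i,j} e_{ij} ⊗ e_{ij}, the adjoint Yang–Baxter equation with vanishing right-hand side holds: [a'₁₂, b'₁₃] + [a'₁₂, b'₂₃] + [b'₁₃, b'₂₃] = 0. -/

import Mathlib

open Matrix BigOperators
open scoped Kronecker

/-- Elementary matrix `e_{ij}`. -/
noncomputable def E (n : ℕ) (i j : Fin n) : Matrix (Fin n) (Fin n) ℂ :=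
  Matrix.single i j 1

/-- `sgn(i - j)` as a complex number, with `sgn(0) = 0`. -/
def sg (n : ℕ) (i j : Fin n) : ℂ := ((((i : ℤ) - (j : ℤ)).sign : ℤ) : ℂ)

/-- Triple Kronecker product, acting on `(ℂ^n)^{⊗3}`. -/
noncomputable def K3 (n : ℕ) (A B C : Matrix (Fin n) (Fin n) ℂ) :
    Matrix ((Fin n × Fin n) × Fin n) ((Fin n × Fin n) × Fin n) ℂ :=
  A ⊗ₖ B ⊗ₖ C

/-- Degasperis–Procesi `a' = (1/2) Σ sgn(i−j) e_{ij} ⊗ e_{ji}` in legs (1,2). -/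
noncomputable def a'12 (n : ℕ) :
    Matrix ((Fin n × Fin n) × Fin n) ((Fin n × Fin n) × Fin n) ℂ :=
  (1/2 : ℂ) • ∑ i : Fin n, ∑ j : Fin n, sg n i j • K3 n (E n i j) (E n j i) 1

/-- Degasperis–Procesi
`b' = −(1/2) Σ sgn(i−j) e_{ij} ⊗ e_{ij} − (1/2) Σ e_{ij} ⊗ e_{ij}` in legs (1,3). -/
noncomputable def b'13 (n : ℕ) :
    Matrix ((Fin n × Fin n) × Fin n) ((Fin n × Fin n) × Fin n) ℂ :=
  (-(1/2) : ℂ) • ∑ i : Fin n, ∑ j : Fin n, sg n i j • K3 n (E n i j) 1 (E n i j)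
  + (-(1/2) : ℂ) • ∑ i : Fin n, ∑ j : Fin n, K3 n (E n i j) 1 (E n i j)

/-- The same `b'` placed in legs (2,3). -/
noncomputable def b'23 (n : ℕ) :
    Matrix ((Fin n × Fin n) × Fin n) ((Fin n × Fin n) × Fin n) ℂ :=
  (-(1/2) : ℂ) • ∑ i : Fin n, ∑ j : Fin n, sg n i j • K3 n 1 (E n i j) (E n i j)
  + (-(1/2) : ℂ) • ∑ i : Fin n, ∑ j : Fin n, K3 n 1 (E n i j) (E n i j)

/-!
Index rows by `((p, q), r)` and columns by `((p', q'), r')`. Each of the six products of two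
of `a'₁₂`, `b'₁₃`, `b'₂₃` is supported on one of the two patterns `r = q, r' = p', q' = p` and
`r = p, r' = q', p' = q`, with entries quadratic in the signs `s(x, y) = sgn(x - y)`. Away from
the diagonal, where both patterns hold, the entry of the left-hand side on either pattern is
`±(s(a,b)s(b,c) + s(b,c)s(c,a) + s(c,a)s(a,b) + 1)/4` for three indices `a, b, c` that are not all
equal. This vanishes: for three distinct values two of the products are `-1` and one is `+1`, and
if exactly two values coincide a single product `-1` survives.
-/

theorem Int.sign_sub_mul_cyclic {a b c : ℤ} (h : ¬(a = b ∧ b = c)) :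
    (a - b).sign * (b - c).sign + (b - c).sign * (c - a).sign + (c - a).sign * (a - b).sign
      = -1 := by
  have sign_eq (x : ℤ) : x.sign = if 0 < x then 1 else if x < 0 then -1 else 0 := by
    split_ifs <;> simp_all [Int.sign_eq_one_of_pos, Int.sign_eq_neg_one_of_neg]; omega
  simp only [sign_eq]
  split_ifs <;> omega

namespace DP

variable {n : ℕ}

lemma sg_swap (i j : Fin n) : sg n j i = -sg n i j := by
  rw [sg, sg, ← neg_sub, Int.sign_neg]; push_cast; rfl

lemma sg_self (i : Fin n) : sg n i i = 0 := by simp [sg]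

lemma sg_mul_cyclic {a b c : Fin n} (h : ¬(a = b ∧ b = c)) :
    sg n a b * sg n b c + sg n b c * sg n c a + sg n c a * sg n a b = -1 := by
  have := Int.sign_sub_mul_cyclic (a := a) (b := b) (c := c) (by simpa [Fin.val_inj] using h)
  simp only [sg]
  exact_mod_cast this

lemma K3_apply (A B C : Matrix (Fin n) (Fin n) ℂ) (p q r p' q' r' : Fin n) :
    K3 n A B C ((p, q), r) ((p', q'), r') = A p p' * B q q' * C r r' := rfl

lemma E_apply (i j a b : Fin n) : E n i j a b = if i = a then if j = b then 1 else 0 else 0 := by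
  simp [E, single_apply, ite_and]

lemma a'12_apply (p q r p' q' r' : Fin n) :
    a'12 n ((p, q), r) ((p', q'), r') =
      if p' = q ∧ q' = p ∧ r' = r then sg n p q / 2 else 0 := by
  simp only [a'12, Matrix.smul_apply, Matrix.sum_apply, K3_apply, E_apply,
    one_apply, mul_ite, mul_one, mul_zero, smul_eq_mul, Finset.sum_ite_irrel, Finset.sum_ite_eq',
    Finset.mem_univ, if_true, Finset.sum_const_zero]
  split_ifs <;> simp_all
  ring

lemma b'13_apply (p q r p' q' r' : Fin n) :
    b'13 n ((p, q), r) ((p', q'), r') =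
      if r = p ∧ r' = p' ∧ q' = q then -(sg n p p' + 1) / 2 else 0 := by
  simp only [b'13, Matrix.add_apply, Matrix.smul_apply, Matrix.sum_apply, K3_apply, E_apply,
    one_apply, mul_ite, mul_one, mul_zero, smul_eq_mul, Finset.sum_ite_irrel, Finset.sum_ite_eq',
    Finset.mem_univ, if_true, Finset.sum_const_zero]
  split_ifs <;> simp_all
  ring

lemma b'23_apply (p q r p' q' r' : Fin n) :
    b'23 n ((p, q), r) ((p', q'), r') =
      if r = q ∧ r' = q' ∧ p' = p then -(sg n q q' + 1) / 2 else 0 := by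
  simp only [b'23, Matrix.add_apply, Matrix.smul_apply, Matrix.sum_apply, K3_apply, E_apply,
    one_apply, mul_ite, mul_one, mul_zero, smul_eq_mul, Finset.sum_ite_irrel, Finset.sum_ite_eq',
    Finset.mem_univ, if_true, Finset.sum_const_zero]
  split_ifs <;> simp_all
  ring

lemma a'12_mul_apply {α : Type*} (M : Matrix ((Fin n × Fin n) × Fin n) α ℂ) (p q r : Fin n)
    (y : α) : (a'12 n * M) ((p, q), r) y = sg n p q / 2 * M ((q, p), r) y := by
  simp [mul_apply, Fintype.sum_prod_type, a'12_apply, ite_and]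

lemma mul_a'12_apply {α : Type*} (M : Matrix α ((Fin n × Fin n) × Fin n) ℂ) (x : α)
    (p q r : Fin n) : (M * a'12 n) x ((p, q), r) = M x ((q, p), r) * (sg n q p / 2) := by
  simp [mul_apply, Fintype.sum_prod_type, a'12_apply, ite_and]

lemma b'13_mul_b'23_apply (p q r p' q' r' : Fin n) :
    (b'13 n * b'23 n) ((p, q), r) ((p', q'), r') =
      if r = p ∧ r' = q' ∧ p' = q then (sg n p q + 1) * (sg n q q' + 1) / 4 else 0 := by
  simp only [mul_apply, Fintype.sum_prod_type, b'13_apply, b'23_apply, ite_and, mul_ite, ite_mul,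
    zero_mul, mul_zero, Finset.sum_ite_irrel, Finset.sum_ite_eq, Finset.sum_ite_eq',
    Finset.mem_univ, if_true, Finset.sum_const_zero]
  split_ifs <;> simp_all
  ring

lemma b'23_mul_b'13_apply (p q r p' q' r' : Fin n) :
    (b'23 n * b'13 n) ((p, q), r) ((p', q'), r') =
      if r = q ∧ r' = p' ∧ q' = p then (sg n q p + 1) * (sg n p p' + 1) / 4 else 0 := by
  simp only [mul_apply, Fintype.sum_prod_type, b'13_apply, b'23_apply, ite_and, mul_ite, ite_mul,
    zero_mul, mul_zero, Finset.sum_ite_irrel, Finset.sum_ite_eq, Finset.sum_ite_eq',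
    Finset.mem_univ, if_true, Finset.sum_const_zero]
  split_ifs <;> simp_all
  ring

end DP

open DP in
theorem DP_adjoint_YangBaxter_zero (n : ℕ) :
    (a'12 n * b'13 n - b'13 n * a'12 n) + (a'12 n * b'23 n - b'23 n * a'12 n) +
      (b'13 n * b'23 n - b'23 n * b'13 n) = 0 := by
  ext ⟨⟨p, q⟩, r⟩ ⟨⟨p', q'⟩, r'⟩
  simp only [Matrix.add_apply, Matrix.sub_apply, Matrix.zero_apply, a'12_mul_apply,
    mul_a'12_apply, b'13_apply, b'23_apply, b'13_mul_b'23_apply, b'23_mul_b'13_apply]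
  by_cases h₁ : r = q ∧ r' = p' ∧ q' = p <;> by_cases h₂ : r = p ∧ r' = q' ∧ p' = q
  · obtain ⟨rfl, rfl, rfl⟩ := h₁
    obtain ⟨rfl, -, rfl⟩ := h₂
    simp [sg_self]
  · obtain ⟨hr, hr', hq'⟩ := h₁
    subst r r' q'
    have hcyc := sg_mul_cyclic (n := n) (a := p) (b := q) (c := p') fun ⟨hpq, hqp'⟩ ↦
      h₂ ⟨hpq.symm, (hpq.trans hqp').symm, hqp'.symm⟩
    simp only [h₂, and_self, if_true, if_false, mul_zero, zero_mul, sub_zero, zero_sub]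
    rw [sg_swap p p'] at hcyc
    rw [sg_swap p q]
    linear_combination (-1 / 4 : ℂ) * hcyc
  · obtain ⟨hr, hr', hp'⟩ := h₂
    subst r r' p'
    have hcyc := sg_mul_cyclic (n := n) (a := p) (b := q) (c := q') fun ⟨hpq, hqq'⟩ ↦
      h₁ ⟨hpq, hqq'.symm, (hpq.trans hqq').symm⟩
    simp only [h₁, and_self, if_true, if_false, mul_zero, zero_mul, sub_zero, zero_sub]
    rw [sg_swap p q'] at hcyc
    rw [sg_swap q q']
    linear_combination (1 / 4 : ℂ) * hcyc
  · simp [h₁, h₂]
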